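/- (Telescoping layer perturbation lemma.) For two L-layer ReLU networks with weights W_i and W_i + H_i respectively, the output difference satisfies ‖f_{w+h}(x) − f_w(x)‖₂ ≤ Σ_{i=1}^{L} (∏_{j>i} ‖W_j + H_j‖₂) · ‖H_i‖₂ · (∏_{j<i} ‖W_j‖₂) · ‖x‖₂. -/

import Mathlib

noncomputable section

/-- Entrywise ReLU on `ℝ^n`. -/
def reluV {n : ℕ} (v : EuclideanSpace ℝ (Fin n)) : EuclideanSpace ℝ (Fin n) :=
  WithLp.toLp 2 (fun i => max 0 (v i))

/-- A composition of ReLU layers `z ↦ ρ(W z)`. -/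
def net (dims : ℕ → ℕ)
    (W : ∀ i : ℕ, EuclideanSpace ℝ (Fin (dims i)) →L[ℝ] EuclideanSpace ℝ (Fin (dims (i + 1)))) :
    (L : ℕ) → EuclideanSpace ℝ (Fin (dims 0)) → EuclideanSpace ℝ (Fin (dims L))
  | 0 => id
  | (L + 1) => fun x => reluV (W L (net dims W L x))

/-! Let `d L` be the distance after `L` layers between the networks with weights `W'` and `W`.
Since ReLU is 1-Lipschitz and fixes `0`, `d (L+1) ≤ ‖W'_L‖ d L + ‖W'_L - W_L‖ ‖f_W^L x‖` and
`‖f_W^L x‖ ≤ (∏_{j<L} ‖W_j‖) ‖x‖`; unrolling this linear recursion gives the telescoping sum. -/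

open Finset

theorem le_sum_prod_mul_of_le_mul_add {d a b : ℕ → ℝ} (ha : ∀ n, 0 ≤ a n) (h0 : d 0 ≤ 0)
    (hd : ∀ n, d (n + 1) ≤ a n * d n + b n) (n : ℕ) :
    d n ≤ ∑ i ∈ range n, (∏ j ∈ Ico (i + 1) n, a j) * b i := by
  induction n with
  | zero => simpa using h0
  | succ n ih =>
    have hprod : ∀ i ∈ range n,
        ∏ j ∈ Ico (i + 1) (n + 1), a j = (∏ j ∈ Ico (i + 1) n, a j) * a n :=
      fun i hi => prod_Ico_succ_top (mem_range.mp hi) _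
    calc d (n + 1) ≤ a n * d n + b n := hd n
      _ ≤ a n * ∑ i ∈ range n, (∏ j ∈ Ico (i + 1) n, a j) * b i + b n := by
        gcongr
        exact ha n
      _ = ∑ i ∈ range (n + 1), (∏ j ∈ Ico (i + 1) (n + 1), a j) * b i := by
        rw [sum_range_succ, Ico_self, prod_empty, one_mul, mul_sum]
        congr 1
        refine sum_congr rfl fun i hi => ?_
        rw [hprod i hi]
        ring

theorem reluV_zero {n : ℕ} : reluV (0 : EuclideanSpace ℝ (Fin n)) = 0 := by
  ext i
  simp [reluV]

theorem norm_reluV_sub_reluV_le {n : ℕ} (a b : EuclideanSpace ℝ (Fin n)) :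
    ‖reluV a - reluV b‖ ≤ ‖a - b‖ := by
  rw [EuclideanSpace.norm_eq, EuclideanSpace.norm_eq]
  gcongr with i
  simp only [reluV, WithLp.ofLp_sub, Pi.sub_apply, Real.norm_eq_abs]
  rw [max_comm 0 (a i), max_comm 0 (b i)]
  exact abs_max_sub_max_le_abs _ _ _

theorem norm_reluV_le {n : ℕ} (a : EuclideanSpace ℝ (Fin n)) : ‖reluV a‖ ≤ ‖a‖ := by
  simpa [reluV_zero] using norm_reluV_sub_reluV_le a 0

section net

variable {dims : ℕ → ℕ}
  (W W' : ∀ i : ℕ, EuclideanSpace ℝ (Fin (dims i)) →L[ℝ] EuclideanSpace ℝ (Fin (dims (i + 1))))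
  (x : EuclideanSpace ℝ (Fin (dims 0)))

theorem norm_net_le (L : ℕ) : ‖net dims W L x‖ ≤ (∏ j ∈ range L, ‖W j‖) * ‖x‖ := by
  induction L with
  | zero => simp [net]
  | succ L ih =>
    calc ‖net dims W (L + 1) x‖ ≤ ‖W L (net dims W L x)‖ := norm_reluV_le _
      _ ≤ ‖W L‖ * ‖net dims W L x‖ := (W L).le_opNorm _
      _ ≤ ‖W L‖ * ((∏ j ∈ range L, ‖W j‖) * ‖x‖) := by gcongr
      _ = (∏ j ∈ range (L + 1), ‖W j‖) * ‖x‖ := by rw [prod_range_succ]; ring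

theorem norm_net_succ_sub_le (L : ℕ) :
    ‖net dims W' (L + 1) x - net dims W (L + 1) x‖ ≤
      ‖W' L‖ * ‖net dims W' L x - net dims W L x‖ + ‖W' L - W L‖ * ‖net dims W L x‖ := by
  set A := net dims W' L x
  set B := net dims W L x
  have hsplit : W' L A - W L B = W' L (A - B) + (W' L - W L) B := by
    simp only [map_sub, sub_apply]
    abel
  calc ‖net dims W' (L + 1) x - net dims W (L + 1) x‖ ≤ ‖W' L A - W L B‖ :=
        norm_reluV_sub_reluV_le _ _
    _ ≤ ‖W' L (A - B)‖ + ‖(W' L - W L) B‖ := hsplit ▸ norm_add_le _ _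
    _ ≤ ‖W' L‖ * ‖A - B‖ + ‖W' L - W L‖ * ‖B‖ :=
        add_le_add ((W' L).le_opNorm _) ((W' L - W L).le_opNorm _)

theorem norm_net_sub_le (L : ℕ) :
    ‖net dims W' L x - net dims W L x‖ ≤
      ∑ i ∈ range L, (∏ j ∈ Ico (i + 1) L, ‖W' j‖) *
        (‖W' i - W i‖ * ((∏ j ∈ range i, ‖W j‖) * ‖x‖)) := by
  refine le_sum_prod_mul_of_le_mul_add (d := fun n => ‖net dims W' n x - net dims W n x‖)
    (fun _ => norm_nonneg _) (by simp [net]) (fun n => ?_) L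
  refine (norm_net_succ_sub_le W W' x n).trans ?_
  gcongr
  exact norm_net_le W x n

end net

/-- telescoping layer perturbation lemma: for two `L`-layer
ReLU networks with weights `Wᵢ` and `Wᵢ + Hᵢ`,
`‖f_{w+h}(x) − f_w(x)‖₂ ≤ Σᵢ (∏_{j>i}‖Wⱼ+Hⱼ‖₂)·‖Hᵢ‖₂·(∏_{j<i}‖Wⱼ‖₂)·‖x‖₂`. -/
theorem stmt17 (dims : ℕ → ℕ) (L : ℕ)
    (W H : ∀ i : ℕ, EuclideanSpace ℝ (Fin (dims i)) →L[ℝ] EuclideanSpace ℝ (Fin (dims (i + 1))))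
    (x : EuclideanSpace ℝ (Fin (dims 0))) :
    ‖net dims (fun i => W i + H i) L x - net dims W L x‖ ≤
      ∑ i ∈ Finset.range L,
        (∏ j ∈ Finset.Ico (i + 1) L, ‖W j + H j‖) * ‖H i‖ *
          (∏ j ∈ Finset.range i, ‖W j‖) * ‖x‖ := by
  simpa only [add_sub_cancel_left, mul_assoc] using norm_net_sub_le W (fun i => W i + H i) x L
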